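/- For every integer n ≥ 2 and all real parameters μ > 0 and ε > 0, the equation F(x, ε, μ) = 0 has at least one solution x > 0 (existence of at least one rosette central configuration). -/

import Mathlib

/-- `k_n = (1/(4n)) · Σ_{k=1}^{n-1} 1/sin(kπ/n)` -/
noncomputable def kn (n : ℕ) : ℝ :=
  (1 / (4 * n)) * ∑ k ∈ Finset.Icc 1 (n - 1), 1 / Real.sin (k * Real.pi / n)

/-- `φ_k = (2k-1)π/n` -/
noncomputable def phi (n k : ℕ) : ℝ := (2 * (k : ℝ) - 1) * Real.pi / n

/-- The central configuration equation function `F(x, ε, μ)`. -/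
noncomputable def F (n : ℕ) (x ε μ : ℝ) : ℝ :=
  μ / n * (1 - x ^ 3) + kn n * (ε - x ^ 3) +
    x ^ 3 / n * ∑ k ∈ Finset.Icc 1 n,
      ((1 - ε) - (1 / x) * (1 - ε * x ^ 2) * Real.cos (phi n k)) /
        (1 + x ^ 2 - 2 * x * Real.cos (phi n k)) ^ ((3 : ℝ) / 2)

/-!
Moving the factor `x³` into the sum clears the `1/x` singularity: the resulting function
`Freg` agrees with `F` for `x > 0`, is continuous on `[0, ∞)` because every `φ_k` stays away from
`0` and `2π`, and equals `μ/n + k_n ε > 0` at `x = 0`. For `x ≥ 2` each denominator is at least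
`(x/2)³`, so the sum grows at most linearly while the cubic terms give
`Freg ≤ C + D x - (μ/n + k_n) x³`, which is negative for large `x`. The intermediate value theorem
then produces a zero, necessarily at some `x > 0`.
-/

open Real Finset

lemma kn_pos {n : ℕ} (hn : 2 ≤ n) : 0 < kn n := by
  have hn0 : (0 : ℝ) < n := by positivity
  refine mul_pos (by positivity) (sum_pos (fun k hk => ?_) ⟨1, by simp; omega⟩)
  rw [mem_Icc] at hk
  have hk1 : (1 : ℝ) ≤ k := by exact_mod_cast hk.1
  have hkn : (k : ℝ) < n := by exact_mod_cast (by omega : k < n)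
  have hsin : 0 < sin (k * π / n) := by
    apply sin_pos_of_pos_of_lt_pi (by positivity)
    rw [div_lt_iff₀ hn0]
    nlinarith [pi_pos]
  positivity

lemma cos_phi_lt_one {n k : ℕ} (hk1 : 1 ≤ k) (hkn : k ≤ n) : cos (phi n k) < 1 := by
  have hn0 : (0 : ℝ) < n := by exact_mod_cast (by omega : 0 < n)
  have hk1' : (1 : ℝ) ≤ k := by exact_mod_cast hk1
  have hkn' : (k : ℝ) ≤ n := by exact_mod_cast hkn
  have hpos : 0 < phi n k := div_pos (by nlinarith [pi_pos]) hn0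
  have hlt : phi n k < 2 * π := by
    rw [phi, div_lt_iff₀ hn0]
    nlinarith [pi_pos]
  refine (cos_le_one _).lt_of_ne fun h => ?_
  linarith [(cos_eq_one_iff_of_lt_of_lt (by linarith) hlt).mp h]

lemma one_add_sq_sub_two_mul_pos {x c : ℝ} (hx : 0 ≤ x) (hc : c < 1) :
    0 < 1 + x ^ 2 - 2 * x * c := by
  nlinarith [sq_nonneg (1 - x), mul_nonneg hx (sub_nonneg.mpr hc.le)]

/-- `x³` times the `k`-th summand of `F`, where `c = cos φ_k`. -/
noncomputable def regSummand (ε x c : ℝ) : ℝ :=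
  (x ^ 3 * (1 - ε) - x ^ 2 * (1 - ε * x ^ 2) * c) / (1 + x ^ 2 - 2 * x * c) ^ ((3 : ℝ) / 2)

noncomputable def Freg (n : ℕ) (x ε μ : ℝ) : ℝ :=
  μ / n * (1 - x ^ 3) + kn n * (ε - x ^ 3) +
    (∑ k ∈ Icc 1 n, regSummand ε x (cos (phi n k))) / n

lemma F_eq_Freg (n : ℕ) {x : ℝ} (hx : 0 < x) (ε μ : ℝ) : F n x ε μ = Freg n x ε μ := by
  rw [F, Freg, mul_sum, sum_div]
  congr 1
  refine sum_congr rfl fun k _ => ?_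
  rw [regSummand]
  field_simp

lemma Freg_zero (n : ℕ) (ε μ : ℝ) : Freg n 0 ε μ = μ / n + kn n * ε := by
  simp [Freg, regSummand]

lemma continuousOn_Freg (n : ℕ) (ε μ : ℝ) : ContinuousOn (fun x => Freg n x ε μ) (Set.Ici 0) := by
  have hsummand : ∀ k ∈ Icc 1 n,
      ContinuousOn (fun x => regSummand ε x (cos (phi n k))) (Set.Ici 0) := by
    intro k hk
    rw [mem_Icc] at hk
    refine ContinuousOn.div (by fun_prop)
      ((continuous_rpow_const (by norm_num)).comp_continuousOn (by fun_prop)) fun x hx => ?_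
    exact (rpow_pos_of_pos (one_add_sq_sub_two_mul_pos hx (cos_phi_lt_one hk.1 hk.2)) _).ne'
  exact (Continuous.continuousOn (by fun_prop)).add
    ((continuousOn_finsetSum _ hsummand).div_const _)

lemma regSummand_le {ε x c : ℝ} (hε : 0 ≤ ε) (hx : 2 ≤ x) (hc : |c| ≤ 1) :
    regSummand ε x c ≤ 8 * |1 - ε| + 8 + 8 * ε * x := by
  obtain ⟨hc₁, hc₂⟩ := abs_le.mp hc
  have hx0 : 0 < x := by linarith
  have hden : x ^ 3 / 8 ≤ (1 + x ^ 2 - 2 * x * c) ^ ((3 : ℝ) / 2) := by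
    have hsq : (x / 2) ^ 2 ≤ 1 + x ^ 2 - 2 * x * c := by
      nlinarith [sq_nonneg (x - 2), mul_le_mul_of_nonneg_left hc₂ hx0.le]
    calc x ^ 3 / 8 = ((x / 2) ^ 2) ^ ((3 : ℝ) / 2) := by
          rw [← rpow_natCast (x / 2) 2, ← rpow_mul (by positivity)]
          norm_num
          ring
      _ ≤ _ := rpow_le_rpow (by positivity) hsq (by norm_num)
  have hnum : x ^ 3 * (1 - ε) - x ^ 2 * (1 - ε * x ^ 2) * c ≤
      x ^ 3 * |1 - ε| + x ^ 2 + ε * x ^ 4 := by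
    nlinarith [mul_le_mul_of_nonneg_left (le_abs_self (1 - ε)) (pow_nonneg hx0.le 3),
      mul_nonneg (sq_nonneg x) (mul_nonneg (mul_nonneg hε (sq_nonneg x)) (sub_nonneg.mpr hc₂)),
      mul_nonneg (sq_nonneg x) (neg_le_iff_add_nonneg.mp hc₁)]
  calc regSummand ε x c ≤ (x ^ 3 * |1 - ε| + x ^ 2 + ε * x ^ 4) / (x ^ 3 / 8) :=
        div_le_div₀ (by positivity) hnum (by positivity) hden
    _ ≤ 8 * |1 - ε| + 8 + 8 * ε * x := by
        rw [div_le_iff₀ (by positivity)]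
        nlinarith [mul_nonneg (sq_nonneg x) (by linarith : (0 : ℝ) ≤ x - 1)]

lemma Freg_le {n : ℕ} (hn : 1 ≤ n) {ε x : ℝ} (hε : 0 ≤ ε) (hx : 2 ≤ x) (μ : ℝ) :
    Freg n x ε μ ≤
      (μ / n + kn n * ε + 8 * |1 - ε| + 8) + 8 * ε * x - (μ / n + kn n) * x ^ 3 := by
  have hn0 : (0 : ℝ) < n := by exact_mod_cast hn
  have hsum : (∑ k ∈ Icc 1 n, regSummand ε x (cos (phi n k))) / n ≤
      8 * |1 - ε| + 8 + 8 * ε * x := by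
    rw [div_le_iff₀' hn0]
    have := sum_le_card_nsmul (Icc 1 n) (fun k => regSummand ε x (cos (phi n k))) _
      fun k _ => regSummand_le hε hx (abs_cos_le_one _)
    rwa [Nat.card_Icc, add_tsub_cancel_right, nsmul_eq_mul] at this
  rw [Freg]
  linarith

lemma exists_add_mul_lt_mul_cube {K : ℝ} (hK : 0 < K) (C D : ℝ) :
    ∃ x : ℝ, 2 ≤ x ∧ C + D * x < K * x ^ 3 := by
  set M := |C| + |D| + 1
  set x := max 2 (M / K)
  have hx : 2 ≤ x := le_max_left _ _
  refine ⟨x, hx, ?_⟩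
  have hKx : M ≤ K * x := (div_le_iff₀' hK).mp (le_max_right _ _)
  have hxx : x ≤ x ^ 2 := by nlinarith
  calc C + D * x ≤ |C| + |D| * x := by
        nlinarith [le_abs_self C, mul_le_mul_of_nonneg_right (le_abs_self D) (by linarith : 0 ≤ x)]
    _ < M * x ^ 2 := by nlinarith [abs_nonneg C, abs_nonneg D]
    _ ≤ K * x * x ^ 2 := mul_le_mul_of_nonneg_right hKx (sq_nonneg x)
    _ = K * x ^ 3 := by ring

theorem exists_rosette_cc (n : ℕ) (hn : 2 ≤ n) (μ ε : ℝ) (hμ : 0 < μ) (hε : 0 < ε) :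
    ∃ x : ℝ, 0 < x ∧ F n x ε μ = 0 := by
  have hkn := kn_pos hn
  have hK : 0 < μ / n + kn n := by positivity
  have hzero : 0 < Freg n 0 ε μ := by
    rw [Freg_zero]
    positivity
  obtain ⟨b, hb, hbig⟩ := exists_add_mul_lt_mul_cube hK (μ / n + kn n * ε + 8 * |1 - ε| + 8) (8 * ε)
  have hneg : Freg n b ε μ < 0 := by
    linarith [Freg_le (by omega : 1 ≤ n) hε.le hb μ]
  obtain ⟨x, hx, hFx⟩ := intermediate_value_Icc' (by linarith : (0 : ℝ) ≤ b)
    ((continuousOn_Freg n ε μ).mono Set.Icc_subset_Ici_self) ⟨hneg.le, hzero.le⟩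
  have hx0 : 0 < x := hx.1.lt_of_ne fun h => by subst h; exact hzero.ne' hFx
  exact ⟨x, hx0, (F_eq_Freg n hx0 ε μ).trans hFx⟩
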